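/- arXiv:2604.07913 — 7 statements merged into one kernel-verified Lean document; each statement's English description precedes it below -/
import Mathlib

section
/- Let α ∈ (0,1) and define γ₀(t, α) = t² / ((α²/(t+1))^{1/t} · (t+1) − 1) − t for integers t ≥ 1 large enough that the denominator is positive. Then as t → ∞, γ₀(t, α) = 2 log(1/α) + log(t+1) + o(1). -/
/-!
With `x = log (α² / (t + 1)) / t` the power in `γ₀` is `eˣ`, and `t x = -(2 log (1/α) + log (t + 1))`.
Putting `g x = 1 + (x - 1) eˣ`, a direct computation gives
`γ₀ + t x = (t g(x) + (x - 1)(eˣ - 1)) / ((eˣ (t + 1) - 1) / t)`.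
The denominator tends to `1`; since `0 ≤ g x ≤ x²` for `x ≤ 0` and `t x² = log² (α² / (t + 1)) / t → 0`,
the numerator tends to `0`.
-/

open Real Filter Topology

noncomputable def gammaZero (α t : ℝ) : ℝ :=
  t ^ 2 / ((α ^ 2 / (t + 1)) ^ (1 / t) * (t + 1) - 1) - t

lemma one_add_sub_one_mul_exp_nonneg (y : ℝ) : 0 ≤ 1 + (y - 1) * exp y := by
  have h : (1 - y) * exp y ≤ exp (-y) * exp y :=
    mul_le_mul_of_nonneg_right (by linarith [add_one_le_exp (-y)]) (exp_pos y).le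
  rw [← exp_add, neg_add_cancel, exp_zero] at h
  linarith

lemma one_add_sub_one_mul_exp_le_sq {y : ℝ} (hy : y ≤ 0) : 1 + (y - 1) * exp y ≤ y ^ 2 := by
  nlinarith [mul_nonneg (by linarith : (0 : ℝ) ≤ 1 - y)
    (by linarith [add_one_le_exp y] : (0 : ℝ) ≤ exp y - y - 1)]

lemma tendsto_log_add_one_pow_div_atTop (n : ℕ) :
    Tendsto (fun t : ℝ => log (t + 1) ^ n / t) atTop (𝓝 0) := by
  refine ((tendsto_pow_log_div_mul_add_atTop 1 (-1) n one_ne_zero).comp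
    (tendsto_atTop_add_const_right _ 1 tendsto_id)).congr fun t => ?_
  simp

lemma tendsto_sq_div_exp_mul_add_one_sub_one {ι : Type*} {l : Filter ι} {t x : ι → ℝ}
    (ht : Tendsto t l atTop) (hx : Tendsto x l (𝓝 0)) (hx_nonpos : ∀ᶠ i in l, x i ≤ 0)
    (htx : Tendsto (fun i => t i * x i ^ 2) l (𝓝 0)) :
    Tendsto (fun i => t i ^ 2 / (exp (x i) * (t i + 1) - 1) - t i + t i * x i) l (𝓝 0) := by
  have ht_pos : ∀ᶠ i in l, 0 < t i := ht.eventually_gt_atTop 0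
  have ht_inv : Tendsto (fun i => (t i)⁻¹) l (𝓝 0) := ht.inv_tendsto_atTop
  have h_main : Tendsto (fun i => t i * (1 + (x i - 1) * exp (x i))) l (𝓝 0) := by
    refine tendsto_of_tendsto_of_tendsto_of_le_of_le' tendsto_const_nhds htx ?_ ?_
    · filter_upwards [ht_pos] with i hi
      exact mul_nonneg hi.le (one_add_sub_one_mul_exp_nonneg _)
    · filter_upwards [ht_pos, hx_nonpos] with i hi hxi
      exact mul_le_mul_of_nonneg_left (one_add_sub_one_mul_exp_le_sq hxi) hi.le
  have h_rest : Tendsto (fun i => (x i - 1) * (exp (x i) - 1)) l (𝓝 0) := by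
    simpa using (hx.sub_const 1).mul (hx.rexp.sub_const 1)
  have h_denom : Tendsto (fun i => exp (x i) * (1 + (t i)⁻¹) - (t i)⁻¹) l (𝓝 1) := by
    simpa using (hx.rexp.mul (ht_inv.const_add 1)).sub ht_inv
  have h_lim := (h_main.add h_rest).div h_denom one_ne_zero
  rw [add_zero, zero_div] at h_lim
  refine h_lim.congr' ?_
  filter_upwards [ht_pos, h_denom.eventually_ne one_ne_zero] with i hi hD
  have hD' : exp (x i) * (t i + 1) - 1 ≠ 0 := by
    contrapose! hD
    field_simp
    linarith
  simp only [Pi.div_apply]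
  field_simp
  ring

theorem tendsto_gammaZero_sub_log {α : ℝ} (hα : α ∈ Set.Ioo (0 : ℝ) 1) :
    Tendsto (fun t => gammaZero α t - (2 * log (1 / α) + log (t + 1))) atTop (𝓝 0) := by
  obtain ⟨hα₀, hα₁⟩ := hα
  have hlog : ∀ t, 0 ≤ t → log (α ^ 2 / (t + 1)) = 2 * log α - log (t + 1) := fun t ht => by
    rw [log_div (by positivity) (by positivity), log_pow, Nat.cast_ofNat]
  have hlog_nonpos : ∀ t, 0 ≤ t → log (α ^ 2 / (t + 1)) ≤ 0 := fun t ht =>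
    log_nonpos (by positivity) (div_le_one_of_le₀ (by nlinarith) (by positivity))
  have hL := tendsto_log_add_one_pow_div_atTop
  have hx : Tendsto (fun t => log (α ^ 2 / (t + 1)) / t) atTop (𝓝 0) := by
    have := ((hL 0).const_mul (2 * log α)).sub (hL 1)
    rw [mul_zero, sub_zero] at this
    refine this.congr' ?_
    filter_upwards [eventually_ge_atTop 0] with t ht
    rw [hlog t ht]
    ring
  have htx : Tendsto (fun t => t * (log (α ^ 2 / (t + 1)) / t) ^ 2) atTop (𝓝 0) := by
    have := (((hL 0).const_mul ((2 * log α) ^ 2)).sub ((hL 1).const_mul (4 * log α))).add (hL 2)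
    rw [mul_zero, mul_zero, sub_zero, add_zero] at this
    refine this.congr' ?_
    filter_upwards [eventually_gt_atTop 0] with t ht
    rw [hlog t ht.le]
    field_simp
    ring
  refine (tendsto_sq_div_exp_mul_add_one_sub_one tendsto_id hx
    ((eventually_ge_atTop 0).mono fun t ht => div_nonpos_of_nonpos_of_nonneg (hlog_nonpos t ht) ht)
    htx).congr' ?_
  filter_upwards [eventually_gt_atTop 0] with t ht
  rw [id_eq, gammaZero, rpow_def_of_pos (by positivity), mul_one_div, one_div α, log_inv,
    mul_div_cancel₀ _ ht.ne', hlog t ht.le]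
  ring

/-- asymptotic expansion of the boundary function γ₀ used to
calibrate GLR stopping boundaries:
γ₀(t, α) = t² / ((α²/(t+1))^{1/t}·(t+1) − 1) − t = 2 log(1/α) + log(t+1) + o(1). -/
theorem stmt0 (α : ℝ) (hα : α ∈ Set.Ioo (0 : ℝ) 1) :
    Filter.Tendsto
      (fun t : ℕ =>
        ((t : ℝ) ^ 2 / ((α ^ 2 / ((t : ℝ) + 1)) ^ ((1 : ℝ) / (t : ℝ)) * ((t : ℝ) + 1) - 1)
            - (t : ℝ))
          - (2 * Real.log (1 / α) + Real.log ((t : ℝ) + 1)))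
      Filter.atTop (nhds 0) :=
  (tendsto_gammaZero_sub_log hα).comp tendsto_natCast_atTop_atTop
end

section
/- Fix α ∈ (0,1), a dimension d ≥ 1, and constants 0 < r < R < ∞. Define γ₀ᴸ(t₁, t₂, α) = (t₁ − d)·t₂ / ((α²/(t₂+1))^{1/(t₁−d+1)} · (t₂+1) − 1) − (t₁ − d). If t₁, t₂ → ∞ with r ≤ t₁/t₂ ≤ R, then γ₀ᴸ(t₁, t₂, α) = 2 log(1/α) + log(t₂+1) + o(1). -/
open Filter Real

lemma auxlim1 (C : ℝ) : Tendsto (fun x : ℝ => (Real.log x + C) / x) atTop (nhds 0) := by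
  have h1 : Tendsto (fun x : ℝ => Real.log x / x) atTop (nhds 0) := by
    simpa using Real.tendsto_pow_log_div_mul_add_atTop 1 0 1 one_ne_zero
  have h0 : Tendsto (fun x : ℝ => C / x) atTop (nhds 0) :=
    tendsto_const_nhds.div_atTop tendsto_id
  have := h1.add h0
  simp only [add_zero] at this
  exact this.congr (fun x => by ring)

lemma auxlim2 (C : ℝ) : Tendsto (fun x : ℝ => (Real.log x + C) ^ 2 / x) atTop (nhds 0) := by
  have h2 : Tendsto (fun x : ℝ => (Real.log x) ^ 2 / x) atTop (nhds 0) := by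
    simpa using Real.tendsto_pow_log_div_mul_add_atTop 1 0 2 one_ne_zero
  have h1 : Tendsto (fun x : ℝ => (2 * C) * (Real.log x / x)) atTop (nhds 0) := by
    simpa using ((Real.tendsto_pow_log_div_mul_add_atTop 1 0 1 one_ne_zero).const_mul (2 * C))
  have h0 : Tendsto (fun x : ℝ => C ^ 2 / x) atTop (nhds 0) :=
    tendsto_const_nhds.div_atTop tendsto_id
  have := (h2.add h1).add h0
  simp only [add_zero] at this
  exact this.congr (fun x => by ring)

lemma gfun_nonneg (u : ℝ) (hu : 0 ≤ u) : 0 ≤ 1 - Real.exp (-u) - u * Real.exp (-u) := by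
  have h := Real.add_one_le_exp u
  have he : 0 < Real.exp (-u) := Real.exp_pos _
  have : (u + 1) * Real.exp (-u) ≤ 1 := by
    have := mul_le_mul_of_nonneg_right h he.le
    rwa [← Real.exp_add, add_neg_cancel, Real.exp_zero] at this
  nlinarith

lemma gfun_le (u : ℝ) (hu : 0 ≤ u) : 1 - Real.exp (-u) - u * Real.exp (-u) ≤ u ^ 2 := by
  have h := Real.add_one_le_exp (-u)
  nlinarith [Real.exp_pos (-u)]

lemma key_identity (c m u : ℝ) (hm : (0:ℝ) < m + 1)
    (hD : (m + 1) * Real.exp (-u) - 1 ≠ 0) :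
    (c - 1) * m / ((m + 1) * Real.exp (-u) - 1) - (c - 1) - c * u
      = (c * (1 - Real.exp (-u) - u * Real.exp (-u)) - (1 - Real.exp (-u)) + c * u / (m + 1))
        / (Real.exp (-u) - 1 / (m + 1)) := by
  have hm' : m + 1 ≠ 0 := ne_of_gt hm
  set E := Real.exp (-u) with hE
  have hDB : (m + 1) * (E - 1 / (m + 1)) = (m + 1) * E - 1 := by
    field_simp
  have hB : E - 1 / (m + 1) ≠ 0 := by
    intro h
    apply hD
    rw [← hDB, h, mul_zero]
  have hL1 : (c - 1) * m / ((m + 1) * E - 1) - (c - 1) - c * u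
      = ((c - 1) * m - ((c - 1) + c * u) * ((m + 1) * E - 1)) / ((m + 1) * E - 1) := by
    rw [eq_div_iff hD, sub_mul, sub_mul, div_mul_cancel₀ _ hD]
    ring
  have hR0 : c * (1 - E - u * E) - (1 - E) + c * u / (m + 1)
      = ((m + 1) * (c * (1 - E - u * E) - (1 - E)) + c * u) / (m + 1) := by
    rw [eq_div_iff hm', add_mul, div_mul_cancel₀ _ hm']
    ring
  rw [hL1, hR0, div_div, mul_comm (m+1) (E - 1/(m+1)), ← mul_comm (m+1), hDB]
  congr 1
  ring

/-- asymptotic expansion of the boundary function γ₀ᴸ for the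
structured linear setting, along sequences t₁, t₂ → ∞ with bounded ratio
r ≤ t₁/t₂ ≤ R:
γ₀ᴸ(t₁, t₂, α) = (t₁−d)·t₂ / ((α²/(t₂+1))^{1/(t₁−d+1)}·(t₂+1) − 1) − (t₁−d)
             = 2 log(1/α) + log(t₂+1) + o(1). -/
theorem stmt1 (α : ℝ) (hα : α ∈ Set.Ioo (0 : ℝ) 1) (d : ℕ) (hd : 1 ≤ d)
    (r R : ℝ) (hr : 0 < r) (hrR : r < R)
    (t₁ t₂ : ℕ → ℕ)
    (ht₁ : Filter.Tendsto (fun n => (t₁ n : ℝ)) Filter.atTop Filter.atTop)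
    (ht₂ : Filter.Tendsto (fun n => (t₂ n : ℝ)) Filter.atTop Filter.atTop)
    (hratio : ∀ n, r ≤ (t₁ n : ℝ) / (t₂ n : ℝ) ∧ (t₁ n : ℝ) / (t₂ n : ℝ) ≤ R) :
    Filter.Tendsto
      (fun n : ℕ =>
        (((t₁ n : ℝ) - d) * (t₂ n : ℝ) /
            ((α ^ 2 / ((t₂ n : ℝ) + 1)) ^ ((1 : ℝ) / ((t₁ n : ℝ) - d + 1)) * ((t₂ n : ℝ) + 1) - 1)
          - ((t₁ n : ℝ) - d))
          - (2 * Real.log (1 / α) + Real.log ((t₂ n : ℝ) + 1)))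
      Filter.atTop (nhds 0) := by
  obtain ⟨hα0, hα1⟩ := hα
  have hαne : α ≠ 0 := ne_of_gt hα0
  set C : ℝ := 2 * Real.log (1 / α) with hCdef
  set m : ℕ → ℝ := fun n => (t₂ n : ℝ) with hmdef
  set c : ℕ → ℝ := fun n => (t₁ n : ℝ) - d + 1 with hcdef
  set L : ℕ → ℝ := fun n => Real.log ((m n + 1) / α ^ 2) with hLdef
  set u : ℕ → ℝ := fun n => L n / c n with hudef
  have hm0 : ∀ n, (0:ℝ) ≤ m n := fun n => Nat.cast_nonneg _
  have hm1 : ∀ n, (0:ℝ) < m n + 1 := fun n => by have := hm0 n; linarith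
  have hmn : ∀ n, m n = (t₂ n : ℝ) := fun n => rfl
  have hcn : ∀ n, c n = (t₁ n : ℝ) - (d:ℝ) + 1 := fun n => rfl
  have hLn : ∀ n, L n = Real.log ((m n + 1) / α ^ 2) := fun n => rfl
  have hun : ∀ n, u n = L n / c n := fun n => rfl
  -- L n = log (m n + 1) + C
  have hLval : ∀ n, L n = Real.log (m n + 1) + C := by
    intro n
    rw [hLn n]
    rw [Real.log_div (ne_of_gt (hm1 n)) (pow_ne_zero 2 hαne), Real.log_pow, hCdef,
      one_div, Real.log_inv]
    push_cast
    ring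
  have hLnonneg : ∀ n, 0 ≤ L n := by
    intro n
    rw [hLn n]
    apply Real.log_nonneg
    rw [one_le_div (by positivity)]
    nlinarith [hm0 n, sq_nonneg α]
  -- eventual lower bound on c
  have ht₂atTop : Tendsto (fun n => m n + 1) atTop atTop :=
    tendsto_atTop_add_const_right _ 1 ht₂
  have hcm : ∀ᶠ n in atTop, r * (m n + 1) / 4 ≤ c n := by
    have h1 : ∀ᶠ n in atTop, (1:ℝ) ≤ m n := ht₂.eventually (eventually_ge_atTop 1)
    have h2 : ∀ᶠ n in atTop, (4 * d + r) / (3 * r) ≤ m n :=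
      ht₂.eventually (eventually_ge_atTop _)
    filter_upwards [h1, h2] with n hn1 hn2
    have ht1 : r * m n ≤ (t₁ n : ℝ) := by
      have hpos : (0:ℝ) < (t₂ n : ℝ) := by rw [← hmn n]; linarith
      have h := (hratio n).1
      rw [le_div_iff₀ hpos] at h
      rw [hmn n]; linarith
    have hd' : (0:ℝ) < d := by exact_mod_cast Nat.pos_of_ne_zero (by omega)
    rw [hcn n]
    have : (4 * (d:ℝ) + r) ≤ 3 * r * m n := by
      rw [div_le_iff₀ (by positivity)] at hn2; linarith
    nlinarith
  have hcpos : ∀ᶠ n in atTop, 0 < c n := by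
    filter_upwards [hcm, ht₂.eventually (eventually_ge_atTop 1)] with n h h1
    have : 0 < r * (m n + 1) / 4 := by positivity
    exact lt_of_lt_of_le this h
  -- u → 0
  have hbound1 : Tendsto (fun n => (4 / r) * ((Real.log (m n + 1) + C) / (m n + 1)))
      atTop (nhds 0) := by
    have := ((auxlim1 C).comp ht₂atTop).const_mul (4 / r)
    simpa using this
  have huu : ∀ᶠ n in atTop,
      u n ≤ (4 / r) * ((Real.log (m n + 1) + C) / (m n + 1)) := by
    filter_upwards [hcm] with n hn
    have hpos : (0:ℝ) < r * (m n + 1) / 4 := by positivity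
    have h1 : u n ≤ L n / (r * (m n + 1) / 4) := by
      rw [hun n]
      exact div_le_div_of_nonneg_left (hLnonneg n) hpos hn
    have h2 : L n / (r * (m n + 1) / 4) = (4 / r) * ((Real.log (m n + 1) + C) / (m n + 1)) := by
      rw [hLval n]
      field_simp
    exact h1.trans (le_of_eq h2)
  have hunonneg : ∀ᶠ n in atTop, 0 ≤ u n := by
    filter_upwards [hcpos] with n hn
    rw [hun n]
    exact div_nonneg (hLnonneg n) hn.le
  have hu0 : Tendsto u atTop (nhds 0) :=
    tendsto_of_tendsto_of_tendsto_of_le_of_le' tendsto_const_nhds hbound1 hunonneg huu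
  -- exp(-u) → 1
  have hE1 : Tendsto (fun n => Real.exp (-u n)) atTop (nhds 1) := by
    have h0 : Tendsto (fun n => -u n) atTop (nhds 0) := by simpa using hu0.neg
    have := (Real.continuous_exp.tendsto 0).comp h0
    simpa [Function.comp_def] using this
  -- c * g(u) → 0
  have hbound2 : Tendsto (fun n => (4 / r) * ((Real.log (m n + 1) + C) ^ 2 / (m n + 1)))
      atTop (nhds 0) := by
    have := ((auxlim2 C).comp ht₂atTop).const_mul (4 / r)
    simpa using this
  have hcg : Tendsto (fun n => c n * (1 - Real.exp (-u n) - u n * Real.exp (-u n)))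
      atTop (nhds 0) := by
    apply tendsto_of_tendsto_of_tendsto_of_le_of_le' tendsto_const_nhds hbound2
    · filter_upwards [hcpos, hunonneg] with n hc hu
      exact mul_nonneg hc.le (gfun_nonneg _ hu)
    · filter_upwards [hcm, hcpos, hunonneg] with n hcm' hc hu
      have h1 : c n * (1 - Real.exp (-u n) - u n * Real.exp (-u n)) ≤ c n * u n ^ 2 :=
        mul_le_mul_of_nonneg_left (gfun_le _ hu) hc.le
      have h2 : c n * u n ^ 2 = L n ^ 2 / c n := by
        rw [hun n]; field_simp
      have hpos : (0:ℝ) < r * (m n + 1) / 4 := by positivity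
      have h3 : L n ^ 2 / c n ≤ L n ^ 2 / (r * (m n + 1) / 4) :=
        div_le_div_of_nonneg_left (sq_nonneg _) hpos hcm'
      have h4 : L n ^ 2 / (r * (m n + 1) / 4)
          = (4 / r) * ((Real.log (m n + 1) + C) ^ 2 / (m n + 1)) := by
        rw [hLval n]; field_simp
      calc c n * (1 - Real.exp (-u n) - u n * Real.exp (-u n)) ≤ c n * u n ^ 2 := h1
        _ = L n ^ 2 / c n := h2
        _ ≤ L n ^ 2 / (r * (m n + 1) / 4) := h3
        _ = (4 / r) * ((Real.log (m n + 1) + C) ^ 2 / (m n + 1)) := h4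
  -- L / (m+1) → 0
  have hLm : Tendsto (fun n => L n / (m n + 1)) atTop (nhds 0) := by
    have := (auxlim1 C).comp ht₂atTop
    refine Tendsto.congr (fun n => ?_) this
    simp only [Function.comp]
    rw [hLval n]
  -- A → 0
  have hA : Tendsto (fun n =>
      c n * (1 - Real.exp (-u n) - u n * Real.exp (-u n)) - (1 - Real.exp (-u n))
        + L n / (m n + 1)) atTop (nhds 0) := by
    have h1 : Tendsto (fun n => 1 - Real.exp (-u n)) atTop (nhds 0) := by
      have h2 : Tendsto (fun n => (1:ℝ) - Real.exp (-u n)) atTop (nhds (1 - 1)) :=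
        Tendsto.sub tendsto_const_nhds hE1
      rwa [sub_self] at h2
    have := (hcg.sub h1).add hLm
    simpa using this
  -- B → 1
  have hB : Tendsto (fun n => Real.exp (-u n) - 1 / (m n + 1)) atTop (nhds 1) := by
    have h1 : Tendsto (fun n => 1 / (m n + 1)) atTop (nhds 0) :=
      tendsto_const_nhds.div_atTop ht₂atTop
    have := hE1.sub h1
    simpa using this
  have hBge : ∀ᶠ n in atTop, (1:ℝ)/2 ≤ Real.exp (-u n) - 1 / (m n + 1) :=
    hB.eventually (eventually_ge_nhds (by norm_num))
  -- final
  have hfinal := hA.div hB one_ne_zero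
  rw [zero_div] at hfinal
  refine Tendsto.congr' ?_ hfinal
  symm
  filter_upwards [hcpos, hBge] with n hc hBn
  have hcne : c n ≠ 0 := ne_of_gt hc
  have hD : (m n + 1) * Real.exp (-u n) - 1 ≠ 0 := by
    have h : (m n + 1) * (Real.exp (-u n) - 1 / (m n + 1)) = (m n + 1) * Real.exp (-u n) - 1 := by
      rw [mul_sub, mul_one_div_cancel (hm1 n).ne']
    have hpos : 0 < (m n + 1) * (Real.exp (-u n) - 1 / (m n + 1)) := by
      apply mul_pos (hm1 n); linarith
    rw [h] at hpos
    exact ne_of_gt hpos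
  -- rewrite rpow
  have hx : (α ^ 2 / ((t₂ n : ℝ) + 1)) ^ ((1 : ℝ) / ((t₁ n : ℝ) - d + 1))
      = Real.exp (-u n) := by
    rw [Real.rpow_def_of_pos (by positivity)]
    congr 1
    have hlog : Real.log (α ^ 2 / ((t₂ n : ℝ) + 1)) = - L n := by
      rw [hLn n, hmn n]
      rw [show α ^ 2 / ((t₂ n : ℝ) + 1) = (((t₂ n : ℝ) + 1) / α ^ 2)⁻¹ by
        rw [inv_div]]
      rw [Real.log_inv]
    rw [hlog, hun n, ← hcn n]
    field_simp
  have hlogsum : 2 * Real.log (1 / α) + Real.log ((t₂ n : ℝ) + 1) = L n := by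
    rw [hLval n, hmn n, hCdef]; ring
  have ht1c : (t₁ n : ℝ) - (d:ℝ) = c n - 1 := by rw [hcn n]; ring
  have hLu : L n = c n * u n := by rw [hun n]; field_simp
  calc (((t₁ n : ℝ) - d) * (t₂ n : ℝ) /
            ((α ^ 2 / ((t₂ n : ℝ) + 1)) ^ ((1 : ℝ) / ((t₁ n : ℝ) - d + 1)) * ((t₂ n : ℝ) + 1) - 1)
          - ((t₁ n : ℝ) - d))
          - (2 * Real.log (1 / α) + Real.log ((t₂ n : ℝ) + 1))
      = (c n - 1) * m n / ((m n + 1) * Real.exp (-u n) - 1) - (c n - 1) - c n * u n := by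
        rw [hx, hlogsum, ht1c, hLu, ← hmn n]; ring
    _ = (c n * (1 - Real.exp (-u n) - u n * Real.exp (-u n)) - (1 - Real.exp (-u n))
          + c n * u n / (m n + 1)) / (Real.exp (-u n) - 1 / (m n + 1)) :=
        key_identity (c n) (m n) (u n) (hm1 n) hD
    _ = (c n * (1 - Real.exp (-u n) - u n * Real.exp (-u n)) - (1 - Real.exp (-u n))
          + L n / (m n + 1)) / (Real.exp (-u n) - 1 / (m n + 1)) := by rw [hLu]
end

section
/- For each integer n ≥ 1, the function V ↦ log G_n(V), where G_n(V) = (1/√(n+1)) · ((n² + n + V) / ((n+1)(n + V)))^{−n/2}, is strictly concave on [0, ∞). In particular, its second derivative equals −n³(2V + n² + 2n) / (2(V+n)²(V + n² + n)²) < 0 for all V ≥ 0. -/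
/-! For `V > -n`, `log G_n V` is an affine combination of `log (V + n)` and `log (V + n² + n)`,
so its second derivative is the explicit rational function of the statement, which is negative
there; the second-derivative test then gives strict concavity. -/

open Real Set Topology

/-- The Gaussian mixture test martingale value (mixing parameter s = 1),
as a function of the self-normalized deviation V. -/
noncomputable def Gmart (n : ℕ) (V : ℝ) : ℝ :=
  (1 / Real.sqrt ((n : ℝ) + 1)) *
    (((n : ℝ) ^ 2 + (n : ℝ) + V) / (((n : ℝ) + 1) * ((n : ℝ) + V))) ^ (-(n : ℝ) / 2)

section LogGmart

variable {n : ℕ} {V : ℝ}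

lemma eventually_pos_add_natCast (hV : 0 < V + n) : ∀ᶠ W in 𝓝 V, 0 < W + (n : ℝ) :=
  (eventually_gt_nhds (show -(n : ℝ) < V by linarith)).mono fun _ hW => by linarith

lemma log_Gmart (hV : 0 < V + n) :
    log (Gmart n V) =
      (n - 1) / 2 * log (n + 1) + n / 2 * (log (V + n) - log (V + n ^ 2 + n)) := by
  have hB : 0 < V + (n : ℝ) ^ 2 + n := by linarith [sq_nonneg (n : ℝ)]
  have hn1 : (0 : ℝ) < n + 1 := by positivity
  have hbase : 0 < ((n : ℝ) ^ 2 + n + V) / ((n + 1) * (n + V)) :=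
    div_pos (by linarith) (mul_pos hn1 (by linarith))
  rw [Gmart, log_mul (by positivity) (rpow_pos_of_pos hbase _).ne', log_rpow hbase, one_div,
    log_inv, log_sqrt hn1.le, log_div (by linarith) (mul_pos hn1 (by linarith)).ne',
    log_mul hn1.ne' (by linarith), show (n : ℝ) ^ 2 + n + V = V + n ^ 2 + n by ring,
    show (n : ℝ) + V = V + n by ring]
  ring

lemma log_Gmart_eventuallyEq (hV : 0 < V + n) :
    (fun W => log (Gmart n W)) =ᶠ[𝓝 V]
      fun W => (n - 1) / 2 * log (n + 1) + n / 2 * (log (W + n) - log (W + n ^ 2 + n)) :=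
  (eventually_pos_add_natCast hV).mono fun _ => log_Gmart

lemma hasDerivAt_log_Gmart (hV : 0 < V + n) :
    HasDerivAt (fun W => log (Gmart n W)) (n / 2 * ((V + n)⁻¹ - (V + n ^ 2 + n)⁻¹)) V := by
  have hB : 0 < V + (n : ℝ) ^ 2 + n := by linarith [sq_nonneg (n : ℝ)]
  have h₁ := ((hasDerivAt_id' V).add_const (n : ℝ)).log hV.ne'
  have h₂ := (((hasDerivAt_id' V).add_const ((n : ℝ) ^ 2)).add_const (n : ℝ)).log hB.ne'
  refine HasDerivAt.congr_of_eventuallyEq ?_ (log_Gmart_eventuallyEq hV)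
  simpa [one_div] using ((h₁.sub h₂).const_mul ((n : ℝ) / 2)).const_add
    (((n : ℝ) - 1) / 2 * log (n + 1))

lemma deriv_log_Gmart_eventuallyEq (hV : 0 < V + n) :
    deriv (fun W => log (Gmart n W)) =ᶠ[𝓝 V]
      fun W => n / 2 * ((W + n)⁻¹ - (W + n ^ 2 + n)⁻¹) :=
  (eventually_pos_add_natCast hV).mono fun _ hW => (hasDerivAt_log_Gmart hW).deriv

lemma deriv_deriv_log_Gmart (hV : 0 < V + n) :
    deriv (deriv fun W => log (Gmart n W)) V =
      -((n : ℝ) ^ 3 * (2 * V + n ^ 2 + 2 * n)) / (2 * (V + n) ^ 2 * (V + n ^ 2 + n) ^ 2) := by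
  have hB : 0 < V + (n : ℝ) ^ 2 + n := by linarith [sq_nonneg (n : ℝ)]
  have h₁ := ((hasDerivAt_id' V).add_const (n : ℝ)).fun_inv hV.ne'
  have h₂ := (((hasDerivAt_id' V).add_const ((n : ℝ) ^ 2)).add_const (n : ℝ)).fun_inv hB.ne'
  rw [(deriv_log_Gmart_eventuallyEq hV).deriv_eq, ((h₁.fun_sub h₂).const_mul ((n : ℝ) / 2)).deriv]
  field_simp
  ring

end LogGmart

lemma neg_cube_mul_div_sq_mul_sq_neg {N V : ℝ} (hN : 0 < N) (hV : 0 < V + N) :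
    -(N ^ 3 * (2 * V + N ^ 2 + 2 * N)) / (2 * (V + N) ^ 2 * (V + N ^ 2 + N) ^ 2) < 0 := by
  have hB : 0 < V + N ^ 2 + N := by linarith [sq_nonneg N]
  have : 0 < 2 * V + N ^ 2 + 2 * N := by nlinarith
  exact div_neg_of_neg_of_pos (neg_neg_of_pos (by positivity)) (by positivity)

/-- for each n ≥ 1, V ↦ log G_n(V) is strictly concave on [0,∞),
with second derivative −n³(2V + n² + 2n) / (2(V+n)²(V+n²+n)²) < 0 for all V ≥ 0. -/
theorem stmt2 (n : ℕ) (hn : 1 ≤ n) :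
    StrictConcaveOn ℝ (Set.Ici (0 : ℝ)) (fun V : ℝ => Real.log (Gmart n V)) ∧
    ∀ V : ℝ, 0 ≤ V →
      deriv (deriv (fun V : ℝ => Real.log (Gmart n V))) V
          = -((n : ℝ) ^ 3 * (2 * V + (n : ℝ) ^ 2 + 2 * (n : ℝ))) /
              (2 * (V + (n : ℝ)) ^ 2 * (V + (n : ℝ) ^ 2 + (n : ℝ)) ^ 2) ∧
      -((n : ℝ) ^ 3 * (2 * V + (n : ℝ) ^ 2 + 2 * (n : ℝ))) /
          (2 * (V + (n : ℝ)) ^ 2 * (V + (n : ℝ) ^ 2 + (n : ℝ)) ^ 2) < 0 := by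
  have hn₀ : (0 : ℝ) < n := by exact_mod_cast hn
  have hV : ∀ V ∈ Ici (0 : ℝ), 0 < V + n := fun V h => by simp only [mem_Ici] at h; linarith
  refine ⟨strictConcaveOn_of_deriv2_neg' (convex_Ici 0) ?_ ?_,
    fun V h => ⟨deriv_deriv_log_Gmart (hV V h), neg_cube_mul_div_sq_mul_sq_neg hn₀ (hV V h)⟩⟩
  · exact fun V h => (hasDerivAt_log_Gmart (hV V h)).continuousAt.continuousWithinAt
  · intro V h
    rw [Function.iterate_succ_apply, Function.iterate_one, deriv_deriv_log_Gmart (hV V h)]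
    exact neg_cube_mul_div_sq_mul_sq_neg hn₀ (hV V h)
end

section
/- Let n₁, n₂ ≥ 1 be integers and v ≥ 0. Define G_n(V) = (1/√(n+1)) · ((n² + n + V)/((n+1)(n + V)))^{−n/2}. Then the minimum of G_{n₁}(v₁)·G_{n₂}(v₂) over all v₁, v₂ ≥ 0 with v₁ + v₂ = v is attained at an endpoint; that is, min over the constraint set equals min{ G_{n₁}(v)·G_{n₂}(0), G_{n₁}(0)·G_{n₂}(v) }. -/
open Set Real


/-- convexity of log((a+x)/(b+x)) on [0,∞) when 0 < b ≤ a -/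
lemma convex_log_ratio {a b : ℝ} (hb : 0 < b) (hab : b ≤ a) :
    ConvexOn ℝ (Ici 0) (fun x : ℝ => Real.log (a + x) - Real.log (b + x)) := by
  have ha : 0 < a := hb.trans_le hab
  have hderiv : ∀ c : ℝ, 0 < c → ∀ x : ℝ, 0 ≤ x →
      HasDerivAt (fun y => Real.log (c + y)) (c + x)⁻¹ x := by
    intro c hc x hx
    have h1 : HasDerivAt (fun y : ℝ => c + y) 1 x := (hasDerivAt_id x).const_add c
    have h2 := (Real.hasDerivAt_log (by positivity : c + x ≠ 0)).comp x h1
    exact h2.congr_deriv (by simp)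
  have hderiv2 : ∀ c : ℝ, 0 < c → ∀ x : ℝ, 0 ≤ x →
      HasDerivAt (fun y => (c + y)⁻¹) (-((c + x)^2)⁻¹) x := by
    intro c hc x hx
    have h1 : HasDerivAt (fun y : ℝ => c + y) 1 x := (hasDerivAt_id x).const_add c
    have h2 := (hasDerivAt_inv (by positivity : c + x ≠ 0)).comp x h1
    exact h2.congr_deriv (by simp)
  refine convexOn_of_hasDerivWithinAt2_nonneg (f' := fun x => (a + x)⁻¹ - (b + x)⁻¹)
    (f'' := fun x => -((a + x)^2)⁻¹ + ((b + x)^2)⁻¹) (convex_Ici 0) ?_ ?_ ?_ ?_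
  · intro x hx
    simp only [mem_Ici] at hx
    exact (((continuousAt_log (by positivity)).comp (by fun_prop)).sub
      ((continuousAt_log (by positivity : b + x ≠ 0)).comp (by fun_prop))).continuousWithinAt
  · intro x hx
    rw [interior_Ici] at hx
    exact (((hderiv a ha x hx.le).sub (hderiv b hb x hx.le))).hasDerivWithinAt
  · intro x hx
    rw [interior_Ici] at hx
    have := ((hderiv2 a ha x hx.le).sub (hderiv2 b hb x hx.le))
    have h : -((a + x)^2)⁻¹ - -((b + x)^2)⁻¹ = -((a + x)^2)⁻¹ + ((b + x)^2)⁻¹ := by ring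
    rw [h] at this
    exact this.hasDerivWithinAt
  · intro x hx
    rw [interior_Ici] at hx
    have h1 : ((a + x)^2)⁻¹ ≤ ((b + x)^2)⁻¹ := by
      apply inv_anti₀ (by simp only [mem_Ioi] at hx; nlinarith)
      have : b + x ≤ a + x := by linarith
      nlinarith [(mem_Ioi.mp hx).le, hb]
    linarith

lemma Gmart_pos {n : ℕ} (hn : 1 ≤ n) {V : ℝ} (hV : 0 ≤ V) : 0 < Gmart n V := by
  have hn1 : (1:ℝ) ≤ (n:ℝ) := by exact_mod_cast hn
  have hbase : 0 < ((n : ℝ) ^ 2 + (n : ℝ) + V) / (((n : ℝ) + 1) * ((n : ℝ) + V)) := by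
    apply div_pos (by nlinarith) (by nlinarith)
  have h : 0 < Real.sqrt ((n:ℝ) + 1) := Real.sqrt_pos.2 (by nlinarith)
  exact mul_pos (one_div_pos.2 h) (Real.rpow_pos_of_pos hbase _)

lemma log_Gmart_concave {n : ℕ} (hn : 1 ≤ n) :
    ConcaveOn ℝ (Ici 0) (fun V => Real.log (Gmart n V)) := by
  have hn1 : (1:ℝ) ≤ (n:ℝ) := by exact_mod_cast hn
  have hb : (0:ℝ) < (n:ℝ) := by linarith
  have hab : (n:ℝ) ≤ (n:ℝ)^2 + n := by nlinarith
  have hconv := convex_log_ratio hb hab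
  have hconc := (ConcaveOn.smul (c := (n:ℝ)/2) (by positivity) hconv.neg).add_const
    (Real.log (1 / Real.sqrt ((n:ℝ)+1)) + ((n:ℝ)/2) * Real.log ((n:ℝ)+1))
  apply hconc.congr
  intro V hV
  simp only [Pi.add_apply, Pi.smul_apply, Pi.neg_apply, smul_eq_mul]
  simp only [mem_Ici] at hV
  have hbase : 0 < ((n : ℝ) ^ 2 + (n : ℝ) + V) / (((n : ℝ) + 1) * ((n : ℝ) + V)) := by
    apply div_pos (by nlinarith) (by nlinarith)
  have hsq : 0 < Real.sqrt ((n:ℝ) + 1) := Real.sqrt_pos.2 (by nlinarith)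
  have h1 : Real.log (Gmart n V) =
      Real.log (1 / Real.sqrt ((n:ℝ)+1)) + (-(n:ℝ)/2) *
        Real.log (((n : ℝ) ^ 2 + (n : ℝ) + V) / (((n : ℝ) + 1) * ((n : ℝ) + V))) := by
    rw [Gmart, Real.log_mul (by positivity) (Real.rpow_pos_of_pos hbase _).ne',
      Real.log_rpow hbase]
  have h2 : Real.log (((n : ℝ) ^ 2 + (n : ℝ) + V) / (((n : ℝ) + 1) * ((n : ℝ) + V))) =
      Real.log ((n:ℝ)^2 + n + V) - Real.log ((n:ℝ)+1) - Real.log ((n:ℝ) + V) := by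
    rw [Real.log_div (by nlinarith) (by nlinarith),
      Real.log_mul (by nlinarith) (by nlinarith)]
    ring_nf
  rw [h1, h2]
  ring

lemma key_ineq (n₁ n₂ : ℕ) (h₁ : 1 ≤ n₁) (h₂ : 1 ≤ n₂) (v : ℝ) (hv : 0 ≤ v)
    (v₁ v₂ : ℝ) (hv₁ : 0 ≤ v₁) (hv₂ : 0 ≤ v₂) (hsum : v₁ + v₂ = v) :
    min (Gmart n₁ v * Gmart n₂ 0) (Gmart n₁ 0 * Gmart n₂ v) ≤ Gmart n₁ v₁ * Gmart n₂ v₂ := by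
  set H : ℝ → ℝ := fun t => Real.log (Gmart n₁ t) + Real.log (Gmart n₂ (v - t)) with hH
  have hA : ConcaveOn ℝ (Icc 0 v) (fun t => Real.log (Gmart n₁ t)) :=
    (log_Gmart_concave h₁).subset (Icc_subset_Ici_self) (convex_Icc 0 v)
  have hB : ConcaveOn ℝ (Icc 0 v) (fun t => Real.log (Gmart n₂ (v - t))) := by
    refine ⟨convex_Icc 0 v, ?_⟩
    intro x hx y hy p q hp hq hpq
    have h := (log_Gmart_concave h₂).2 (show v - x ∈ Ici 0 by simp [hx.2])
      (show v - y ∈ Ici 0 by simp [hy.2]) hp hq hpq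
    have heq : v - (p • x + q • y) = p • (v - x) + q • (v - y) := by
      simp only [smul_eq_mul]
      linear_combination (-v) * hpq
    show p • Real.log (Gmart n₂ (v - x)) + q • Real.log (Gmart n₂ (v - y)) ≤
      Real.log (Gmart n₂ (v - (p • x + q • y)))
    rw [heq]
    exact h
  have hHC : ConcaveOn ℝ (Icc 0 v) H := hA.add hB
  have hseg : v₁ ∈ segment ℝ (0:ℝ) v := by
    rw [segment_eq_Icc hv]; exact ⟨hv₁, by linarith⟩
  have hmin : min (H 0) (H v) ≤ H v₁ :=
    hHC.ge_on_segment ⟨le_refl 0, hv⟩ ⟨hv, le_refl v⟩ hseg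
  have hp1 := Gmart_pos h₁ hv₁
  have hp2 := Gmart_pos h₂ hv₂
  have hp10 := Gmart_pos h₁ (le_refl (0:ℝ))
  have hp20 := Gmart_pos h₂ (le_refl (0:ℝ))
  have hp1v := Gmart_pos h₁ hv
  have hp2v := Gmart_pos h₂ hv
  have e1 : Real.exp (H v₁) = Gmart n₁ v₁ * Gmart n₂ v₂ := by
    have : v - v₁ = v₂ := by linarith
    rw [hH]
    simp only [this]
    rw [Real.exp_add, Real.exp_log hp1, Real.exp_log hp2]
  have e0 : Real.exp (H 0) = Gmart n₁ 0 * Gmart n₂ v := by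
    rw [hH]; simp only [sub_zero]
    rw [Real.exp_add, Real.exp_log hp10, Real.exp_log hp2v]
  have ev : Real.exp (H v) = Gmart n₁ v * Gmart n₂ 0 := by
    rw [hH]; simp only [sub_self]
    rw [Real.exp_add, Real.exp_log hp1v, Real.exp_log hp20]
  have hE : Real.exp (min (H 0) (H v)) ≤ Real.exp (H v₁) := Real.exp_le_exp.2 hmin
  rw [Real.exp_monotone.map_min, e0, ev, e1] at hE
  rw [min_comm] at hE
  exact hE

/-- the minimum of G_{n₁}(v₁)·G_{n₂}(v₂) over v₁, v₂ ≥ 0 with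
v₁ + v₂ = v is attained at an endpoint:
min = min{ G_{n₁}(v)·G_{n₂}(0), G_{n₁}(0)·G_{n₂}(v) }. -/
theorem stmt3 (n₁ n₂ : ℕ) (h₁ : 1 ≤ n₁) (h₂ : 1 ≤ n₂) (v : ℝ) (hv : 0 ≤ v) :
    sInf {z : ℝ | ∃ v₁ v₂ : ℝ, 0 ≤ v₁ ∧ 0 ≤ v₂ ∧ v₁ + v₂ = v ∧
        z = Gmart n₁ v₁ * Gmart n₂ v₂}
      = min (Gmart n₁ v * Gmart n₂ 0) (Gmart n₁ 0 * Gmart n₂ v) := by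
  set S := {z : ℝ | ∃ v₁ v₂ : ℝ, 0 ≤ v₁ ∧ 0 ≤ v₂ ∧ v₁ + v₂ = v ∧
      z = Gmart n₁ v₁ * Gmart n₂ v₂} with hS
  have hm1 : Gmart n₁ v * Gmart n₂ 0 ∈ S := ⟨v, 0, hv, le_refl 0, by ring, rfl⟩
  have hm2 : Gmart n₁ 0 * Gmart n₂ v ∈ S := ⟨0, v, le_refl 0, hv, by ring, rfl⟩
  have hlb : ∀ z ∈ S, min (Gmart n₁ v * Gmart n₂ 0) (Gmart n₁ 0 * Gmart n₂ v) ≤ z := by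
    rintro z ⟨v₁, v₂, hv₁, hv₂, hsum, rfl⟩
    exact key_ineq n₁ n₂ h₁ h₂ v hv v₁ v₂ hv₁ hv₂ hsum
  have hbdd : BddBelow S := ⟨_, hlb⟩
  exact le_antisymm (le_min (csInf_le hbdd hm1) (csInf_le hbdd hm2))
    (le_csInf ⟨_, hm1⟩ hlb)
end

section
/- Consider the constrained optimization: minimize f(β, β') = (1/(2σ²))‖Y − Fβ‖² + (1/(2σ'²))‖Y' − F'β'‖² over β, β' ∈ ℝᵈ subject to fᵀβ ≤ fᵀβ', where F ∈ ℝ^{n×d} and F' ∈ ℝ^{n'×d} have full column rank, D = FᵀF, D' = F'ᵀF', and β̂ = D⁻¹FᵀY, β̂' = D'⁻¹F'ᵀY' are the unconstrained minimizers. If fᵀβ̂ > fᵀβ̂', then the constrained minimizers are β* = β̂ − c·σ²D⁻¹f and β'* = β̂' + c·σ'²D'⁻¹f, where c = (fᵀβ̂ − fᵀβ̂')/(σ² fᵀD⁻¹f + σ'² fᵀD'⁻¹f), and the optimal value exceeds the unconstrained optimal value by exactly (fᵀβ̂ − fᵀβ̂')²/(2(σ² fᵀD⁻¹f + σ'² fᵀD'⁻¹f)).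 -/
open Matrix

lemma dot_self_pos {d : ℕ} {v : Fin d → ℝ} (hv : v ≠ 0) : 0 < v ⬝ᵥ v :=
  lt_of_le_of_ne (Finset.sum_nonneg fun i _ => mul_self_nonneg _)
    (fun h => hv (dotProduct_self_eq_zero.mp h.symm))

lemma posDef_tmul {n d : ℕ} (F : Matrix (Fin n) (Fin d) ℝ) (hF : F.rank = d) :
    (Fᵀ * F).PosDef := by
  have hker : LinearMap.ker F.mulVecLin = ⊥ := by
    have h1 := LinearMap.finrank_range_add_finrank_ker F.mulVecLin
    rw [show Module.finrank ℝ (Fin d → ℝ) = d by simp] at h1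
    have h2 : Module.finrank ℝ (LinearMap.ker F.mulVecLin) = 0 := by
      have : F.rank = Module.finrank ℝ (LinearMap.range F.mulVecLin) := rfl
      omega
    exact Submodule.finrank_eq_zero.mp h2
  have hinj : ∀ x : Fin d → ℝ, F *ᵥ x = 0 → x = 0 := by
    intro x hx
    have : x ∈ LinearMap.ker F.mulVecLin := by simpa [LinearMap.mem_ker] using hx
    simpa [hker] using this
  refine posDef_iff_dotProduct_mulVec.mpr ⟨?_, ?_⟩
  · have := isHermitian_conjTranspose_mul_self F
    simpa [conjTranspose_eq_transpose_of_trivial] using this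
  · intro x hx
    have hx' : F *ᵥ x ≠ 0 := fun h => hx (hinj x h)
    have : star x ⬝ᵥ (Fᵀ * F) *ᵥ x = (F *ᵥ x) ⬝ᵥ (F *ᵥ x) := by
      rw [star_trivial, ← mulVec_mulVec, dotProduct_mulVec, ← mulVec_transpose, transpose_transpose]
    rw [this]
    exact dot_self_pos hx'

lemma ls_expand {n d : ℕ} (F : Matrix (Fin n) (Fin d) ℝ) (Y : Fin n → ℝ)
    (βh : Fin d → ℝ) (hnormal : Fᵀ *ᵥ Y = (Fᵀ * F) *ᵥ βh) (β : Fin d → ℝ) :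
    (∑ i, (Y i - (F *ᵥ β) i) ^ 2) = (∑ i, (Y i - (F *ᵥ βh) i) ^ 2)
      + (β - βh) ⬝ᵥ ((Fᵀ * F) *ᵥ (β - βh)) := by
  have hsq : ∀ γ : Fin d → ℝ, (∑ i, (Y i - (F *ᵥ γ) i) ^ 2) = (Y - F *ᵥ γ) ⬝ᵥ (Y - F *ᵥ γ) := by
    intro γ; simp [dotProduct, sq]
  have hres : Fᵀ *ᵥ (Y - F *ᵥ βh) = 0 := by
    rw [mulVec_sub, mulVec_mulVec, ← hnormal, sub_self]
  have hcross : (Y - F *ᵥ βh) ⬝ᵥ (F *ᵥ (β - βh)) = 0 := by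
    rw [dotProduct_mulVec, ← mulVec_transpose, hres, zero_dotProduct]
  have hcross' : (F *ᵥ (β - βh)) ⬝ᵥ (Y - F *ᵥ βh) = 0 := by
    rw [dotProduct_comm]; exact hcross
  have hquad : (F *ᵥ (β - βh)) ⬝ᵥ (F *ᵥ (β - βh)) = (β - βh) ⬝ᵥ ((Fᵀ * F) *ᵥ (β - βh)) := by
    rw [dotProduct_mulVec, ← mulVec_transpose, mulVec_mulVec, dotProduct_comm]
  have hdecomp : Y - F *ᵥ β = (Y - F *ᵥ βh) - F *ᵥ (β - βh) := by
    rw [mulVec_sub]; abel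
  simp only [dotProduct_sub, sub_dotProduct] at hcross hcross' hquad
  simp only [hsq, hdecomp, dotProduct_sub, sub_dotProduct]
  linarith [hquad]

lemma cs_quad {d : ℕ} (D : Matrix (Fin d) (Fin d) ℝ) (hD : D.PosDef)
    (f u : Fin d → ℝ) :
    (f ⬝ᵥ u) ^ 2 ≤ (f ⬝ᵥ D⁻¹ *ᵥ f) * (u ⬝ᵥ D *ᵥ u) := by
  have hdet : IsUnit D.det := hD.det_pos.ne'.isUnit
  set x := D⁻¹ *ᵥ f with hx
  have hDx : D *ᵥ x = f := by
    rw [hx, mulVec_mulVec, mul_nonsing_inv D hdet, one_mulVec]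
  have hsymm : Dᵀ = D := by
    have := hD.1; rwa [IsHermitian, conjTranspose_eq_transpose_of_trivial] at this
  have hvm : ∀ v : Fin d → ℝ, x ⬝ᵥ D *ᵥ v = f ⬝ᵥ v := by
    intro v
    rw [dotProduct_mulVec, ← mulVec_transpose, hsymm, hDx]
  have hxDx : x ⬝ᵥ D *ᵥ x = f ⬝ᵥ x := hvm x
  have huDx : u ⬝ᵥ D *ᵥ x = f ⬝ᵥ u := by rw [hDx, dotProduct_comm]
  have hpos : ∀ s : ℝ, 0 ≤ (f ⬝ᵥ x) * (s * s) + (2 * (f ⬝ᵥ u)) * s + u ⬝ᵥ D *ᵥ u := by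
    intro s
    have h0 : 0 ≤ (u + s • x) ⬝ᵥ D *ᵥ (u + s • x) := by
      rcases eq_or_ne (u + s • x) 0 with h | h
      · simp [h]
      · exact le_of_lt (by simpa [star_trivial] using hD.dotProduct_mulVec_pos h)
    have hexp : (u + s • x) ⬝ᵥ D *ᵥ (u + s • x) =
        (f ⬝ᵥ x) * (s * s) + (2 * (f ⬝ᵥ u)) * s + u ⬝ᵥ D *ᵥ u := by
      rw [mulVec_add, mulVec_smul, dotProduct_add, add_dotProduct, add_dotProduct,
        dotProduct_smul, smul_dotProduct, dotProduct_smul, smul_dotProduct,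
        smul_eq_mul, smul_eq_mul, smul_eq_mul, smul_eq_mul, hvm u, hxDx, huDx]
      ring
    linarith [hexp ▸ h0]
  have := discrim_le_zero hpos
  rw [discrim] at this
  nlinarith

lemma scalar_min {p p' g a a' : ℝ} (hp : 0 < p) (hp' : 0 < p') (hg : 0 < g)
    (h : g ≤ a' - a) : g ^ 2 / (p + p') ≤ a ^ 2 / p + a' ^ 2 / p' := by
  have h2 : g ^ 2 ≤ (a' - a) ^ 2 := by nlinarith
  rw [div_add_div _ _ hp.ne' hp'.ne', div_le_div_iff₀ (by linarith) (by positivity)]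
  nlinarith [sq_nonneg (a * p' + p * a'), mul_pos hp hp',
    mul_le_mul_of_nonneg_right h2 (le_of_lt (mul_pos hp hp'))]

/-- closed-form KKT solution of the constrained least-squares
problem arising in the GLR statistic for comparing two linear models along a
direction f.  If fᵀβ̂ > fᵀβ̂', the constrained minimizers over
{fᵀβ ≤ fᵀβ'} are β* = β̂ − c·σ²D⁻¹f and β'* = β̂' + c·σ'²D'⁻¹f with
c = (fᵀβ̂ − fᵀβ̂')/(σ²fᵀD⁻¹f + σ'²fᵀD'⁻¹f), and the optimal value exceeds the
unconstrained one by (fᵀβ̂ − fᵀβ̂')²/(2(σ²fᵀD⁻¹f + σ'²fᵀD'⁻¹f)). -/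
theorem stmt10 {n n' d : ℕ}
    (F : Matrix (Fin n) (Fin d) ℝ) (F' : Matrix (Fin n') (Fin d) ℝ)
    (Y : Fin n → ℝ) (Y' : Fin n' → ℝ) (f : Fin d → ℝ) (hf : f ≠ 0)
    (σ σ' : ℝ) (hσ : 0 < σ) (hσ' : 0 < σ')
    (hF : F.rank = d) (hF' : F'.rank = d)
    (D D' : Matrix (Fin d) (Fin d) ℝ) (hD : D = Fᵀ * F) (hD' : D' = F'ᵀ * F')
    (βh βh' : Fin d → ℝ)
    (hβh : βh = D⁻¹.mulVec (Fᵀ.mulVec Y))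
    (hβh' : βh' = D'⁻¹.mulVec (F'ᵀ.mulVec Y'))
    (hgt : f ⬝ᵥ βh' < f ⬝ᵥ βh)
    (c : ℝ)
    (hc : c = (f ⬝ᵥ βh - f ⬝ᵥ βh') /
        (σ ^ 2 * (f ⬝ᵥ D⁻¹.mulVec f) + σ' ^ 2 * (f ⬝ᵥ D'⁻¹.mulVec f)))
    (βs βs' : Fin d → ℝ)
    (hβs : βs = βh - c • σ ^ 2 • D⁻¹.mulVec f)
    (hβs' : βs' = βh' + c • σ' ^ 2 • D'⁻¹.mulVec f)
    (obj : (Fin d → ℝ) → (Fin d → ℝ) → ℝ)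
    (hobj : ∀ β β', obj β β' =
        (∑ i, (Y i - F.mulVec β i) ^ 2) / (2 * σ ^ 2) +
        (∑ i, (Y' i - F'.mulVec β' i) ^ 2) / (2 * σ' ^ 2)) :
    f ⬝ᵥ βs ≤ f ⬝ᵥ βs' ∧
    (∀ β β' : Fin d → ℝ, f ⬝ᵥ β ≤ f ⬝ᵥ β' → obj βs βs' ≤ obj β β') ∧
    obj βs βs' = obj βh βh' +
      (f ⬝ᵥ βh - f ⬝ᵥ βh') ^ 2 /
        (2 * (σ ^ 2 * (f ⬝ᵥ D⁻¹.mulVec f) + σ' ^ 2 * (f ⬝ᵥ D'⁻¹.mulVec f))) := by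
  have hσ2 : (0:ℝ) < σ ^ 2 := by positivity
  have hσ'2 : (0:ℝ) < σ' ^ 2 := by positivity
  have hDpd : D.PosDef := hD ▸ posDef_tmul F hF
  have hD'pd : D'.PosDef := hD' ▸ posDef_tmul F' hF'
  have hDipd : D⁻¹.PosDef := hDpd.inv
  have hD'ipd : D'⁻¹.PosDef := hD'pd.inv
  have hDdet : IsUnit D.det := hDpd.det_pos.ne'.isUnit
  have hD'det : IsUnit D'.det := hD'pd.det_pos.ne'.isUnit
  set t := f ⬝ᵥ D⁻¹ *ᵥ f with ht_def
  set t' := f ⬝ᵥ D'⁻¹ *ᵥ f with ht'_def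
  have ht : 0 < t := by rw [ht_def]; simpa using hDipd.dotProduct_mulVec_pos hf
  have ht' : 0 < t' := by rw [ht'_def]; simpa using hD'ipd.dotProduct_mulVec_pos hf
  set den := σ ^ 2 * t + σ' ^ 2 * t' with hden_def
  have hden : 0 < den := by rw [hden_def]; positivity
  set g := f ⬝ᵥ βh - f ⬝ᵥ βh' with hg_def
  have hg : 0 < g := by rw [hg_def]; linarith
  have hcg : c * den = g := by rw [hc, div_mul_cancel₀ _ hden.ne']
  -- normal equations
  have hnormD : Fᵀ *ᵥ Y = (Fᵀ * F) *ᵥ βh := by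
    rw [← hD, hβh, mulVec_mulVec, mul_nonsing_inv D hDdet, one_mulVec]
  have hnormD' : F'ᵀ *ᵥ Y' = (F'ᵀ * F') *ᵥ βh' := by
    rw [← hD', hβh', mulVec_mulVec, mul_nonsing_inv D' hD'det, one_mulVec]
  have hobj2 : ∀ β β' : Fin d → ℝ, obj β β' = obj βh βh' +
      ((β - βh) ⬝ᵥ (D *ᵥ (β - βh))) / (2 * σ ^ 2) +
      ((β' - βh') ⬝ᵥ (D' *ᵥ (β' - βh'))) / (2 * σ' ^ 2) := by
    intro β β'
    rw [hobj β β', hobj βh βh', ls_expand F Y βh hnormD β, ls_expand F' Y' βh' hnormD' β',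
      ← hD, ← hD']
    ring
  -- cancellation facts
  have hDif : D *ᵥ (D⁻¹ *ᵥ f) = f := by
    rw [mulVec_mulVec, mul_nonsing_inv D hDdet, one_mulVec]
  have hD'if : D' *ᵥ (D'⁻¹ *ᵥ f) = f := by
    rw [mulVec_mulVec, mul_nonsing_inv D' hD'det, one_mulVec]
  have hqf : (D⁻¹ *ᵥ f) ⬝ᵥ (D *ᵥ (D⁻¹ *ᵥ f)) = t := by
    rw [hDif, dotProduct_comm, ht_def]
  have hqf' : (D'⁻¹ *ᵥ f) ⬝ᵥ (D' *ᵥ (D'⁻¹ *ᵥ f)) = t' := by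
    rw [hD'if, dotProduct_comm, ht'_def]
  -- part 1
  have hfs : f ⬝ᵥ βs = f ⬝ᵥ βh - c * (σ ^ 2 * t) := by
    rw [hβs, dotProduct_sub, dotProduct_smul, dotProduct_smul, smul_eq_mul, smul_eq_mul,
      ht_def]
  have hfs' : f ⬝ᵥ βs' = f ⬝ᵥ βh' + c * (σ' ^ 2 * t') := by
    rw [hβs', dotProduct_add, dotProduct_smul, dotProduct_smul, smul_eq_mul, smul_eq_mul,
      ht'_def]
  have hcden : c * (σ ^ 2 * t) + c * (σ' ^ 2 * t') = g := by
    rw [← hcg, hden_def]; ring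
  have part1 : f ⬝ᵥ βs ≤ f ⬝ᵥ βs' := by
    rw [hfs, hfs']
    have hgeq : g = f ⬝ᵥ βh - f ⬝ᵥ βh' := hg_def
    linarith
  -- part 3 : value at the constrained minimizer
  have hβsu : βs - βh = (-(c * σ ^ 2)) • (D⁻¹ *ᵥ f) := by
    rw [hβs, sub_sub_cancel_left, smul_smul, neg_smul]
  have hβsu' : βs' - βh' = (c * σ' ^ 2) • (D'⁻¹ *ᵥ f) := by
    rw [hβs', add_sub_cancel_left, smul_smul]
  have hq1 : (βs - βh) ⬝ᵥ (D *ᵥ (βs - βh)) = (c * σ ^ 2) ^ 2 * t := by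
    rw [hβsu, smul_dotProduct, mulVec_smul, dotProduct_smul, smul_eq_mul, smul_eq_mul, hqf]
    ring
  have hq2 : (βs' - βh') ⬝ᵥ (D' *ᵥ (βs' - βh')) = (c * σ' ^ 2) ^ 2 * t' := by
    rw [hβsu', smul_dotProduct, mulVec_smul, dotProduct_smul, smul_eq_mul, smul_eq_mul, hqf']
    ring
  have part3 : obj βs βs' = obj βh βh' + g ^ 2 / (2 * den) := by
    rw [hobj2 βs βs', hq1, hq2]
    have hden2 : σ ^ 2 * t + σ' ^ 2 * t' ≠ 0 := by positivity
    have key : (c * σ ^ 2) ^ 2 * t / (2 * σ ^ 2) + (c * σ' ^ 2) ^ 2 * t' / (2 * σ' ^ 2)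
        = g ^ 2 / (2 * den) := by
      rw [← hcg, hden_def]
      field_simp
    linarith
  refine ⟨part1, ?_, part3⟩
  -- part 2 : optimality
  intro β β' hfeas
  rw [part3, hobj2 β β']
  set q := (β - βh) ⬝ᵥ (D *ᵥ (β - βh)) with hq_def
  set q' := (β' - βh') ⬝ᵥ (D' *ᵥ (β' - βh')) with hq'_def
  set a := f ⬝ᵥ (β - βh) with ha_def
  set a' := f ⬝ᵥ (β' - βh') with ha'_def
  have hcs1 : a ^ 2 ≤ t * q := cs_quad D hDpd f (β - βh)
  have hcs2 : a' ^ 2 ≤ t' * q' := cs_quad D' hD'pd f (β' - βh')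
  have hfeas2 : g ≤ a' - a := by
    rw [ha_def, ha'_def, hg_def, dotProduct_sub, dotProduct_sub]
    linarith
  have hsc : g ^ 2 / (σ ^ 2 * t + σ' ^ 2 * t') ≤
      a ^ 2 / (σ ^ 2 * t) + a' ^ 2 / (σ' ^ 2 * t') :=
    scalar_min (by positivity) (by positivity) hg hfeas2
  have hb1 : a ^ 2 / (σ ^ 2 * t) ≤ q / σ ^ 2 := by
    rw [div_le_div_iff₀ (by positivity) hσ2]
    calc a ^ 2 * σ ^ 2 ≤ (t * q) * σ ^ 2 := mul_le_mul_of_nonneg_right hcs1 hσ2.le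
      _ = q * (σ ^ 2 * t) := by ring
  have hb2 : a' ^ 2 / (σ' ^ 2 * t') ≤ q' / σ' ^ 2 := by
    rw [div_le_div_iff₀ (by positivity) hσ'2]
    calc a' ^ 2 * σ' ^ 2 ≤ (t' * q') * σ' ^ 2 := mul_le_mul_of_nonneg_right hcs2 hσ'2.le
      _ = q' * (σ' ^ 2 * t') := by ring
  have e0 : g ^ 2 / (2 * den) = (g ^ 2 / den) / 2 := by rw [div_div, mul_comm den 2]
  have e1 : q / (2 * σ ^ 2) = (q / σ ^ 2) / 2 := by rw [div_div, mul_comm (σ ^ 2) 2]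
  have e2 : q' / (2 * σ' ^ 2) = (q' / σ' ^ 2) / 2 := by rw [div_div, mul_comm (σ' ^ 2) 2]
  have e3 : g ^ 2 / den = g ^ 2 / (σ ^ 2 * t + σ' ^ 2 * t') := by rw [hden_def]
  linarith
end

section
/- Under the Gaussian linear model, with known variances σ²(a), σ²(a'), design matrices D_t(a), D_t(a') positive definite, OLS estimators β̂_t(a), β̂_t(a'), and Σ_t(x,c) = f(x)ᵀ D_t(c)⁻¹ f(x), suppose f(x)ᵀβ̂_t(a) ≥ f(x)ᵀβ̂_t(a') − δ. Then the generalized likelihood ratio statistic Z (the log of the ratio of the likelihood maximized over f(x)ᵀβ(a) ≥ f(x)ᵀβ(a') − δ to the likelihood maximized over f(x)ᵀβ(a) ≤ f(x)ᵀβ(a') − δ) equals (f(x)ᵀβ̂_t(a) − f(x)ᵀβ̂_t(a') + δ)² / (2(σ²(a)Σ_t(x,a) + σ²(a')Σ_t(x,a'))). Moreover, swapping the roles of a and a' negates the statistic. -/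
open Matrix

lemma sum_dot {n d : ℕ} (x : Fin n → Fin d → ℝ) (u v : Fin d → ℝ) :
    u ⬝ᵥ (Matrix.of fun i j => ∑ s, x s i * x s j).mulVec v
      = ∑ s, (x s ⬝ᵥ u) * (x s ⬝ᵥ v) := by
  have hM : (Matrix.of fun i j => ∑ s, x s i * x s j)
      = (Matrix.of x)ᵀ * (Matrix.of x) := by
    ext i j
    simp [Matrix.mul_apply, mul_comm]
  rw [hM, ← Matrix.mulVec_mulVec, Matrix.dotProduct_mulVec, Matrix.vecMul_transpose]
  rfl

lemma dot_sum {n d : ℕ} (x : Fin n → Fin d → ℝ) (Y : Fin n → ℝ) (u : Fin d → ℝ) :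
    u ⬝ᵥ (fun i => ∑ s, Y s * x s i) = ∑ s, Y s * (x s ⬝ᵥ u) := by
  have hc : (fun i => ∑ s, Y s * x s i) = (Matrix.of x)ᵀ.mulVec Y := by
    funext i
    simp [Matrix.mulVec, dotProduct, mul_comm]
  rw [hc, Matrix.dotProduct_mulVec, Matrix.vecMul_transpose, dotProduct_comm]
  exact Finset.sum_congr rfl fun s _ => by
    show Y s * (Matrix.of x *ᵥ u) s = _
    rfl

lemma psd_nonneg {d : ℕ} (M : Matrix (Fin d) (Fin d) ℝ) (h : M.PosDef) (u : Fin d → ℝ) :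
    0 ≤ u ⬝ᵥ M.mulVec u := h.posSemidef.re_dotProduct_nonneg u

lemma pd_pos {d : ℕ} (M : Matrix (Fin d) (Fin d) ℝ) (h : M.PosDef) (u : Fin d → ℝ)
    (hu : u ≠ 0) : 0 < u ⬝ᵥ M.mulVec u := h.re_dotProduct_pos hu

lemma minv_vec {d : ℕ} (M : Matrix (Fin d) (Fin d) ℝ) (h : M.PosDef) (v : Fin d → ℝ) :
    M.mulVec (M⁻¹.mulVec v) = v := by
  rw [Matrix.mulVec_mulVec, Matrix.mul_nonsing_inv _ (isUnit_iff_ne_zero.mpr h.det_pos.ne'),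
    Matrix.one_mulVec]

lemma sym_dot {d : ℕ} (M : Matrix (Fin d) (Fin d) ℝ) (h : M.IsHermitian) (u v : Fin d → ℝ) :
    u ⬝ᵥ M.mulVec v = v ⬝ᵥ M.mulVec u := by
  rw [Matrix.dotProduct_mulVec, ← Matrix.mulVec_transpose, show Mᵀ = M from h, dotProduct_comm]

lemma cs_pd {d : ℕ} (M : Matrix (Fin d) (Fin d) ℝ) (hM : M.PosDef) (f u : Fin d → ℝ) :
    (f ⬝ᵥ u) ^ 2 ≤ (f ⬝ᵥ M⁻¹.mulVec f) * (u ⬝ᵥ M.mulVec u) := by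
  set w := M⁻¹.mulVec f with hw
  have hMw : M.mulVec w = f := minv_vec M hM f
  have hwu : w ⬝ᵥ M.mulVec u = f ⬝ᵥ u := by
    rw [sym_dot M hM.isHermitian w u, hMw, dotProduct_comm]
  have huw : u ⬝ᵥ M.mulVec w = f ⬝ᵥ u := by rw [hMw, dotProduct_comm]
  have hww : w ⬝ᵥ M.mulVec w = f ⬝ᵥ M⁻¹.mulVec f := by
    rw [sym_dot M hM.isHermitian w w]
    conv_lhs => rw [hMw]
    rw [dotProduct_comm]
  have key : ∀ t : ℝ, 0 ≤ (f ⬝ᵥ M⁻¹.mulVec f) * (t * t) + (-2 * (f ⬝ᵥ u)) * t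
      + (u ⬝ᵥ M.mulVec u) := by
    intro t
    have h0 : 0 ≤ (u - t • w) ⬝ᵥ M.mulVec (u - t • w) := psd_nonneg M hM _
    rw [Matrix.mulVec_sub, Matrix.mulVec_smul] at h0
    simp only [sub_dotProduct, dotProduct_sub, smul_dotProduct, dotProduct_smul,
      smul_eq_mul] at h0
    rw [hwu, huw, hww] at h0
    nlinarith [h0]
  have hd := discrim_le_zero (a := f ⬝ᵥ M⁻¹.mulVec f) (b := -2 * (f ⬝ᵥ u))
    (c := u ⬝ᵥ M.mulVec u) key
  rw [discrim] at hd
  nlinarith [hd]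

lemma ssr_decomp {n d : ℕ} (x : Fin n → Fin d → ℝ) (Y : Fin n → ℝ)
    (D : Matrix (Fin d) (Fin d) ℝ) (hD : D = Matrix.of fun i j => ∑ s, x s i * x s j)
    (hDpos : D.PosDef) (βh : Fin d → ℝ)
    (hβh : βh = D⁻¹.mulVec fun i => ∑ s, Y s * x s i) (β : Fin d → ℝ) :
    ∑ s, (Y s - x s ⬝ᵥ β) ^ 2
      = (∑ s, (Y s - x s ⬝ᵥ βh) ^ 2) + (β - βh) ⬝ᵥ D.mulVec (β - βh) := by
  have hDβh : D.mulVec βh = fun i => ∑ s, Y s * x s i := by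
    rw [hβh]; exact minv_vec D hDpos _
  set u := β - βh with hu
  have hxu : ∀ s, x s ⬝ᵥ β = x s ⬝ᵥ βh + x s ⬝ᵥ u := by
    intro s; rw [hu, dotProduct_sub]; ring
  have h3 : ∑ s, (x s ⬝ᵥ u) * (x s ⬝ᵥ u) = u ⬝ᵥ D.mulVec u := by
    rw [hD]; exact (sum_dot x u u).symm
  have hcross : ∑ s, (Y s - x s ⬝ᵥ βh) * (x s ⬝ᵥ u) = 0 := by
    have e1 : ∑ s, Y s * (x s ⬝ᵥ u) = u ⬝ᵥ D.mulVec βh := by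
      rw [hDβh]; exact (dot_sum x Y u).symm
    have e2 : ∑ s, (x s ⬝ᵥ βh) * (x s ⬝ᵥ u) = u ⬝ᵥ D.mulVec βh := by
      rw [hD, sum_dot x u βh]
      exact Finset.sum_congr rfl fun s _ => mul_comm _ _
    calc ∑ s, (Y s - x s ⬝ᵥ βh) * (x s ⬝ᵥ u)
        = (∑ s, Y s * (x s ⬝ᵥ u)) - ∑ s, (x s ⬝ᵥ βh) * (x s ⬝ᵥ u) := by
          rw [← Finset.sum_sub_distrib]
          exact Finset.sum_congr rfl fun s _ => by ring
      _ = 0 := by rw [e1, e2, sub_self]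
  calc ∑ s, (Y s - x s ⬝ᵥ β) ^ 2
      = ∑ s, ((Y s - x s ⬝ᵥ βh) ^ 2 - 2 * ((Y s - x s ⬝ᵥ βh) * (x s ⬝ᵥ u))
          + (x s ⬝ᵥ u) * (x s ⬝ᵥ u)) := by
        refine Finset.sum_congr rfl fun s _ => ?_
        rw [hxu s]; ring
    _ = (∑ s, (Y s - x s ⬝ᵥ βh) ^ 2) - 2 * (∑ s, (Y s - x s ⬝ᵥ βh) * (x s ⬝ᵥ u))
          + ∑ s, (x s ⬝ᵥ u) * (x s ⬝ᵥ u) := by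
        rw [Finset.sum_add_distrib, Finset.sum_sub_distrib, Finset.mul_sum]
    _ = (∑ s, (Y s - x s ⬝ᵥ βh) ^ 2) + u ⬝ᵥ D.mulVec u := by
        rw [hcross, h3]; ring

lemma helper_amgm (x y p : ℝ) (hx : 0 ≤ x) (hy : 0 ≤ y) (hp : p ^ 2 ≤ x * y) :
    -2 * p ≤ x + y := by
  rcases le_or_gt 0 p with h | h
  · linarith
  · nlinarith [sq_nonneg (x - y), sq_nonneg (x + y + 2 * p)]

lemma arith_key (m c1 c2 A B qa qb sa sb : ℝ) (hsa : 0 < sa) (hsb : 0 < sb)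
    (hm : 0 ≤ m) (hle : m ≤ c2 - c1) (h1 : c1 ^ 2 ≤ A * qa) (h2 : c2 ^ 2 ≤ B * qb)
    (hA : 0 < A) (hB : 0 < B) (hqa : 0 ≤ qa) (hqb : 0 ≤ qb) :
    m ^ 2 / (2 * (sa * A + sb * B)) ≤ qa / (2 * sa) + qb / (2 * sb) := by
  have hx : (0:ℝ) ≤ sa / sb * A * qb := by positivity
  have hy : (0:ℝ) ≤ sb / sa * B * qa := by positivity
  have hp : (c1 * c2) ^ 2 ≤ (sa / sb * A * qb) * (sb / sa * B * qa) := by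
    have h12 : c1 ^ 2 * c2 ^ 2 ≤ (A * qa) * (B * qb) :=
      mul_le_mul h1 h2 (sq_nonneg c2) (by positivity)
    have heq : (sa / sb * A * qb) * (sb / sa * B * qa) = (A * qa) * (B * qb) := by
      field_simp
    nlinarith [h12]
  have hkey := helper_amgm _ _ _ hx hy hp
  have hm2 : m ^ 2 ≤ (sa * A + sb * B) * (qa / sa + qb / sb) := by
    have hsq : m ^ 2 ≤ (c2 - c1) ^ 2 := by nlinarith
    have expand : (sa * A + sb * B) * (qa / sa + qb / sb)
        = A * qa + B * qb + (sa / sb * A * qb + sb / sa * B * qa) := by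
      field_simp; ring
    nlinarith [hkey, h1, h2]
  rw [div_le_iff₀ (by positivity)]
  calc m ^ 2 ≤ (sa * A + sb * B) * (qa / sa + qb / sb) := hm2
    _ = (qa / (2 * sa) + qb / (2 * sb)) * (2 * (sa * A + sb * B)) := by
        field_simp

/-- Lemma 2 of the paper: under the Gaussian linear model with
known variances, if f(x)ᵀβ̂(a) ≥ f(x)ᵀβ̂(a') − δ, the GLR statistic — the log
of the ratio of the likelihood maximized over f(x)ᵀβ(a) ≥ f(x)ᵀβ(a') − δ to
the likelihood maximized over f(x)ᵀβ(a) ≤ f(x)ᵀβ(a') − δ — equals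
(f(x)ᵀβ̂(a) − f(x)ᵀβ̂(a') + δ)² / (2(σ²(a)Σ(x,a) + σ²(a')Σ(x,a'))), and
swapping the roles of the two actions negates the statistic. -/
theorem stmt11 {na nb d : ℕ}
    (xA : Fin na → Fin d → ℝ) (xB : Fin nb → Fin d → ℝ)
    (YA : Fin na → ℝ) (YB : Fin nb → ℝ)
    (fx : Fin d → ℝ) (δ : ℝ) (σa σb : ℝ) (hσa : 0 < σa) (hσb : 0 < σb)
    (D D' : Matrix (Fin d) (Fin d) ℝ)
    (hD : D = Matrix.of fun i j => ∑ s, xA s i * xA s j)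
    (hD' : D' = Matrix.of fun i j => ∑ s, xB s i * xB s j)
    (hDpos : D.PosDef) (hD'pos : D'.PosDef)
    (βh βh' : Fin d → ℝ)
    (hβh : βh = D⁻¹.mulVec fun i => ∑ s, YA s * xA s i)
    (hβh' : βh' = D'⁻¹.mulVec fun i => ∑ s, YB s * xB s i)
    (SigA SigB : ℝ) (hSigA : SigA = fx ⬝ᵥ D⁻¹.mulVec fx) (hSigB : SigB = fx ⬝ᵥ D'⁻¹.mulVec fx)
    (L L' : (Fin d → ℝ) → ℝ)
    (hL : ∀ β, L β = ∏ s, (1 / Real.sqrt (2 * Real.pi * σa ^ 2)) *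
        Real.exp (-(YA s - xA s ⬝ᵥ β) ^ 2 / (2 * σa ^ 2)))
    (hL' : ∀ β, L' β = ∏ s, (1 / Real.sqrt (2 * Real.pi * σb ^ 2)) *
        Real.exp (-(YB s - xB s ⬝ᵥ β) ^ 2 / (2 * σb ^ 2)))
    (hcond : fx ⬝ᵥ βh' - δ ≤ fx ⬝ᵥ βh) :
    Real.log
        (sSup {z : ℝ | ∃ β β' : Fin d → ℝ, fx ⬝ᵥ β' - δ ≤ fx ⬝ᵥ β ∧ z = L β * L' β'} /
         sSup {z : ℝ | ∃ β β' : Fin d → ℝ, fx ⬝ᵥ β ≤ fx ⬝ᵥ β' - δ ∧ z = L β * L' β'})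
      = (fx ⬝ᵥ βh - fx ⬝ᵥ βh' + δ) ^ 2 / (2 * (σa ^ 2 * SigA + σb ^ 2 * SigB)) ∧
    Real.log
        (sSup {z : ℝ | ∃ β β' : Fin d → ℝ, fx ⬝ᵥ β ≤ fx ⬝ᵥ β' - δ ∧ z = L β * L' β'} /
         sSup {z : ℝ | ∃ β β' : Fin d → ℝ, fx ⬝ᵥ β' - δ ≤ fx ⬝ᵥ β ∧ z = L β * L' β'})
      = -((fx ⬝ᵥ βh - fx ⬝ᵥ βh' + δ) ^ 2 / (2 * (σa ^ 2 * SigA + σb ^ 2 * SigB))) := by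
  -- quadratic forms
  set qa : (Fin d → ℝ) → ℝ := fun β => (β - βh) ⬝ᵥ D.mulVec (β - βh) with hqa_def
  set qb : (Fin d → ℝ) → ℝ := fun β => (β - βh') ⬝ᵥ D'.mulVec (β - βh') with hqb_def
  have hqa_nonneg : ∀ β, 0 ≤ qa β := fun β => psd_nonneg D hDpos _
  have hqb_nonneg : ∀ β, 0 ≤ qb β := fun β => psd_nonneg D' hD'pos _
  -- likelihood normal form
  obtain ⟨Ka, hKa, hLa⟩ : ∃ Ka : ℝ, 0 < Ka ∧
      ∀ β, L β = Ka * Real.exp (-(qa β) / (2 * σa ^ 2)) := by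
    refine ⟨(1 / Real.sqrt (2 * Real.pi * σa ^ 2)) ^ na *
      Real.exp (-(∑ s, (YA s - xA s ⬝ᵥ βh) ^ 2) / (2 * σa ^ 2)), by positivity, fun β => ?_⟩
    rw [hL β, Finset.prod_mul_distrib, Finset.prod_const, Finset.card_univ, Fintype.card_fin,
      ← Real.exp_sum]
    have hsum : ∑ s, (-(YA s - xA s ⬝ᵥ β) ^ 2 / (2 * σa ^ 2))
        = -((∑ s, (YA s - xA s ⬝ᵥ βh) ^ 2) + qa β) / (2 * σa ^ 2) := by
      have hqaβ : qa β = (β - βh) ⬝ᵥ D.mulVec (β - βh) := by rw [hqa_def]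
      rw [hqaβ, ← Finset.sum_div, Finset.sum_neg_distrib,
        ssr_decomp xA YA D hD hDpos βh hβh β]
    rw [hsum, show -((∑ s, (YA s - xA s ⬝ᵥ βh) ^ 2) + qa β) / (2 * σa ^ 2)
      = -(∑ s, (YA s - xA s ⬝ᵥ βh) ^ 2) / (2 * σa ^ 2) + -(qa β) / (2 * σa ^ 2) by ring,
      Real.exp_add]
    ring
  obtain ⟨Kb, hKb, hLb⟩ : ∃ Kb : ℝ, 0 < Kb ∧
      ∀ β, L' β = Kb * Real.exp (-(qb β) / (2 * σb ^ 2)) := by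
    refine ⟨(1 / Real.sqrt (2 * Real.pi * σb ^ 2)) ^ nb *
      Real.exp (-(∑ s, (YB s - xB s ⬝ᵥ βh') ^ 2) / (2 * σb ^ 2)), by positivity, fun β => ?_⟩
    rw [hL' β, Finset.prod_mul_distrib, Finset.prod_const, Finset.card_univ, Fintype.card_fin,
      ← Real.exp_sum]
    have hsum : ∑ s, (-(YB s - xB s ⬝ᵥ β) ^ 2 / (2 * σb ^ 2))
        = -((∑ s, (YB s - xB s ⬝ᵥ βh') ^ 2) + qb β) / (2 * σb ^ 2) := by
      have hqbβ : qb β = (β - βh') ⬝ᵥ D'.mulVec (β - βh') := by rw [hqb_def]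
      rw [hqbβ, ← Finset.sum_div, Finset.sum_neg_distrib,
        ssr_decomp xB YB D' hD' hD'pos βh' hβh' β]
    rw [hsum, show -((∑ s, (YB s - xB s ⬝ᵥ βh') ^ 2) + qb β) / (2 * σb ^ 2)
      = -(∑ s, (YB s - xB s ⬝ᵥ βh') ^ 2) / (2 * σb ^ 2) + -(qb β) / (2 * σb ^ 2) by ring,
      Real.exp_add]
    ring
  set K := Ka * Kb with hK_def
  have hK : 0 < K := mul_pos hKa hKb
  have hprod : ∀ β β', L β * L' β'
      = K * Real.exp (-(qa β / (2 * σa ^ 2) + qb β' / (2 * σb ^ 2))) := by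
    intro β β'
    rw [hLa β, hLb β', show -(qa β / (2 * σa ^ 2) + qb β' / (2 * σb ^ 2))
      = -(qa β) / (2 * σa ^ 2) + -(qb β') / (2 * σb ^ 2) by ring, Real.exp_add, hK_def]
    ring
  have hqa_zero : qa βh = 0 := by
    rw [hqa_def]; simp
  have hqb_zero : qb βh' = 0 := by
    rw [hqb_def]; simp
  -- greatest element of the unconstrained-type set S1
  have hub1 : IsGreatest
      {z : ℝ | ∃ β β' : Fin d → ℝ, fx ⬝ᵥ β' - δ ≤ fx ⬝ᵥ β ∧ z = L β * L' β'} K := by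
    constructor
    · exact ⟨βh, βh', hcond, by rw [hprod, hqa_zero, hqb_zero]; simp⟩
    · rintro z ⟨β, β', _, rfl⟩
      rw [hprod]
      have h1 : Real.exp (-(qa β / (2 * σa ^ 2) + qb β' / (2 * σb ^ 2))) ≤ 1 := by
        rw [Real.exp_le_one_iff]
        have := hqa_nonneg β
        have := hqb_nonneg β'
        have h2 : 0 ≤ qa β / (2 * σa ^ 2) := by positivity
        have h3 : 0 ≤ qb β' / (2 * σb ^ 2) := by positivity
        linarith
      calc K * Real.exp (-(qa β / (2 * σa ^ 2) + qb β' / (2 * σb ^ 2)))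
          ≤ K * 1 := mul_le_mul_of_nonneg_left h1 hK.le
        _ = K := mul_one K
  by_cases hfx : fx = 0
  · -- degenerate case
    subst hfx
    simp only [zero_dotProduct] at hcond hSigA hSigB ⊢
    have hδ : 0 ≤ δ := by linarith
    rw [hSigA, hSigB]
    rw [show (2 * (σa ^ 2 * 0 + σb ^ 2 * 0) : ℝ) = 0 by ring]
    rw [div_zero]
    rcases eq_or_lt_of_le hδ with hδ0 | hδpos
    · subst hδ0
      have hss : {z : ℝ | ∃ β β' : Fin d → ℝ, (0:ℝ) - 0 ≤ 0 ∧ z = L β * L' β'}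
          = {z : ℝ | ∃ β β' : Fin d → ℝ, (0:ℝ) ≤ 0 - 0 ∧ z = L β * L' β'} := by
        ext z; norm_num
      rw [hss]
      rcases eq_or_ne (sSup {z : ℝ | ∃ β β' : Fin d → ℝ, (0:ℝ) ≤ 0 - 0 ∧ z = L β * L' β'}) 0
        with h | h
      · rw [h, div_zero, Real.log_zero]
        norm_num
      · rw [div_self h, Real.log_one]
        norm_num
    · have h2 : {z : ℝ | ∃ β β' : Fin d → ℝ, (0:ℝ) ≤ 0 - δ ∧ z = L β * L' β'} = ∅ := by
        ext z
        simp only [Set.mem_setOf_eq, Set.mem_empty_iff_false, iff_false, not_exists]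
        intro β β' ⟨h, _⟩
        linarith
      rw [h2, Real.sSup_empty, div_zero, zero_div, Real.log_zero]
      norm_num
  · -- main case
    have hSA : 0 < SigA := by rw [hSigA]; exact pd_pos _ hDpos.inv fx hfx
    have hSB : 0 < SigB := by rw [hSigB]; exact pd_pos _ hD'pos.inv fx hfx
    set m := fx ⬝ᵥ βh - fx ⬝ᵥ βh' + δ with hm_def
    have hm : 0 ≤ m := by rw [hm_def]; linarith
    set V := σa ^ 2 * SigA + σb ^ 2 * SigB with hV_def
    have hV : 0 < V := by
      rw [hV_def]
      have := mul_pos (pow_pos hσa 2) hSA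
      have := mul_pos (pow_pos hσb 2) hSB
      linarith
    set w := m ^ 2 / (2 * V) with hw_def
    set β₂ := βh - ((m / V) * σa ^ 2) • (D⁻¹.mulVec fx) with hβ₂
    set β₂' := βh' + ((m / V) * σb ^ 2) • (D'⁻¹.mulVec fx) with hβ₂'
    have hfxa : fx ⬝ᵥ β₂ = fx ⬝ᵥ βh - (m / V) * σa ^ 2 * SigA := by
      rw [hβ₂, dotProduct_sub, dotProduct_smul, smul_eq_mul, hSigA]
    have hfxb : fx ⬝ᵥ β₂' = fx ⬝ᵥ βh' + (m / V) * σb ^ 2 * SigB := by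
      rw [hβ₂', dotProduct_add, dotProduct_smul, smul_eq_mul, hSigB]
    have hmV : (m / V) * V = m := div_mul_cancel₀ m hV.ne'
    have hconstraint : fx ⬝ᵥ β₂ ≤ fx ⬝ᵥ β₂' - δ := by
      rw [hfxa, hfxb]
      have : (m / V) * σa ^ 2 * SigA + (m / V) * σb ^ 2 * SigB = m := by
        calc (m / V) * σa ^ 2 * SigA + (m / V) * σb ^ 2 * SigB
            = (m / V) * (σa ^ 2 * SigA + σb ^ 2 * SigB) := by ring
          _ = (m / V) * V := by rw [← hV_def]
          _ = m := hmV
      rw [hm_def] at this ⊢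
      linarith
    have hqa2 : qa β₂ = ((m / V) * σa ^ 2) ^ 2 * SigA := by
      rw [hqa_def]
      show (β₂ - βh) ⬝ᵥ D.mulVec (β₂ - βh) = _
      have hsub : β₂ - βh = -(((m / V) * σa ^ 2) • (D⁻¹.mulVec fx)) := by
        rw [hβ₂]; abel
      rw [hsub]
      rw [Matrix.mulVec_neg, Matrix.mulVec_smul, minv_vec D hDpos fx]
      simp only [neg_dotProduct, dotProduct_neg, neg_neg, smul_dotProduct, dotProduct_smul,
        smul_eq_mul]
      rw [show (D⁻¹.mulVec fx) ⬝ᵥ fx = fx ⬝ᵥ D⁻¹.mulVec fx from dotProduct_comm _ _, ← hSigA]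
      ring
    have hqb2 : qb β₂' = ((m / V) * σb ^ 2) ^ 2 * SigB := by
      rw [hqb_def]
      show (β₂' - βh') ⬝ᵥ D'.mulVec (β₂' - βh') = _
      have hsub : β₂' - βh' = ((m / V) * σb ^ 2) • (D'⁻¹.mulVec fx) := by
        rw [hβ₂']; abel
      rw [hsub]
      rw [Matrix.mulVec_smul, minv_vec D' hD'pos fx]
      simp only [smul_dotProduct, dotProduct_smul, smul_eq_mul]
      rw [show (D'⁻¹.mulVec fx) ⬝ᵥ fx = fx ⬝ᵥ D'⁻¹.mulVec fx from dotProduct_comm _ _, ← hSigB]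
      ring
    have hgval : qa β₂ / (2 * σa ^ 2) + qb β₂' / (2 * σb ^ 2) = w := by
      rw [hqa2, hqb2, hw_def, hV_def]
      have hVne : V ≠ 0 := hV.ne'
      rw [hV_def] at hVne
      field_simp
    have hub2 : IsGreatest
        {z : ℝ | ∃ β β' : Fin d → ℝ, fx ⬝ᵥ β ≤ fx ⬝ᵥ β' - δ ∧ z = L β * L' β'}
        (K * Real.exp (-w)) := by
      constructor
      · exact ⟨β₂, β₂', hconstraint, by rw [hprod, hgval]⟩
      · rintro z ⟨β, β', hc, rfl⟩
        rw [hprod]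
        have hg : w ≤ qa β / (2 * σa ^ 2) + qb β' / (2 * σb ^ 2) := by
          rw [hw_def, hV_def]
          have h1 : (fx ⬝ᵥ (β - βh)) ^ 2 ≤ SigA * qa β := by
            rw [hSigA, hqa_def]; exact cs_pd D hDpos fx (β - βh)
          have h2 : (fx ⬝ᵥ (β' - βh')) ^ 2 ≤ SigB * qb β' := by
            rw [hSigB, hqb_def]; exact cs_pd D' hD'pos fx (β' - βh')
          have hle : m ≤ (fx ⬝ᵥ (β' - βh')) - (fx ⬝ᵥ (β - βh)) := by
            rw [dotProduct_sub, dotProduct_sub, hm_def]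
            linarith
          exact arith_key m (fx ⬝ᵥ (β - βh)) (fx ⬝ᵥ (β' - βh')) SigA SigB (qa β) (qb β')
            (σa ^ 2) (σb ^ 2) (pow_pos hσa 2) (pow_pos hσb 2) hm hle h1 h2 hSA hSB
            (hqa_nonneg β) (hqb_nonneg β')
        exact mul_le_mul_of_nonneg_left (Real.exp_le_exp.mpr (neg_le_neg hg)) hK.le
    rw [hub1.csSup_eq, hub2.csSup_eq]
    have hdiv1 : K / (K * Real.exp (-w)) = Real.exp w := by
      rw [Real.exp_neg]
      field_simp
    have hdiv2 : (K * Real.exp (-w)) / K = Real.exp (-w) := by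
      rw [mul_comm, mul_div_assoc, div_self hK.ne', mul_one]
    exact ⟨by rw [hdiv1, Real.log_exp], by rw [hdiv2, Real.log_exp]⟩
end

section
/- Let y_a ≤ y_{a'} − η for some η ≥ 0, and let Ȳ_a, Ȳ_{a'}, S_a², S_{a'}², N_a, N_{a'} be sample means, sample variances, and sample sizes of the two populations, with Ȳ_a ≥ Ȳ_{a'} − η. Then the plug-in GLR statistic Z̃ = (Ȳ_a − Ȳ_{a'} + η)²/(2(S_a²/N_a + S_{a'}²/N_{a'})) is bounded above by the summed self-normalized deviation U = N_a(Ȳ_a − y_a)²/(2S_a²) + N_{a'}(Ȳ_{a'} − y_{a'})²/(2S_{a'}²). -/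
open Finset

section Sedrakyan

variable {R : Type*} [Semifield R] [LinearOrder R] [IsStrictOrderedRing R] [ExistsAddOfLE R]

theorem add_sq_div_add_le (u v : R) {p q : R} (hp : 0 < p) (hq : 0 < q) :
    (u + v) ^ 2 / (p + q) ≤ u ^ 2 / p + v ^ 2 / q := by
  simpa [Fin.sum_univ_two] using
    sq_sum_div_le_sum_sq_div univ ![u, v] (g := ![p, q]) (by simp [Fin.forall_fin_two, hp, hq])

theorem sq_div_add_le_of_le_add {A u v p q : R} (hA : 0 ≤ A) (hAuv : A ≤ u + v)
    (hp : 0 < p) (hq : 0 < q) :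
    A ^ 2 / (p + q) ≤ u ^ 2 / p + v ^ 2 / q :=
  (div_le_div_of_nonneg_right (pow_le_pow_left₀ hA hAuv 2) (add_pos hp hq).le).trans
    (add_sq_div_add_le u v hp hq)

end Sedrakyan

theorem stmt19_general (Na Na' : ℕ) (hNa : 1 ≤ Na) (hNa' : 1 ≤ Na')
    (ya ya' Ya Ya' Sa2 Sa'2 η : ℝ)
    (hgap : ya ≤ ya' - η) (hemp : Ya' - η ≤ Ya)
    (hS : 0 < Sa2) (hS' : 0 < Sa'2) :
    (Ya - Ya' + η) ^ 2 / (2 * (Sa2 / (Na : ℝ) + Sa'2 / (Na' : ℝ)))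
      ≤ (Na : ℝ) * (Ya - ya) ^ 2 / (2 * Sa2) +
        (Na' : ℝ) * (Ya' - ya') ^ 2 / (2 * Sa'2) := by
  have hNa0 : (0 : ℝ) < Na := by exact_mod_cast hNa
  have hNa'0 : (0 : ℝ) < Na' := by exact_mod_cast hNa'
  -- the gap condition gives Ȳ_a − Ȳ_{a'} + η ≤ (Ȳ_a − y_a) + (y_{a'} − Ȳ_{a'})
  have key := sq_div_add_le_of_le_add (A := Ya - Ya' + η) (u := Ya - ya) (v := ya' - Ya')
    (by linarith) (by linarith) (div_pos hS hNa0) (div_pos hS' hNa'0)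
  calc (Ya - Ya' + η) ^ 2 / (2 * (Sa2 / Na + Sa'2 / Na'))
      = (Ya - Ya' + η) ^ 2 / (Sa2 / Na + Sa'2 / Na') / 2 := by rw [div_div, mul_comm]
    _ ≤ ((Ya - ya) ^ 2 / (Sa2 / Na) + (ya' - Ya') ^ 2 / (Sa'2 / Na')) / 2 := by gcongr
    _ = Na * (Ya - ya) ^ 2 / (2 * Sa2) + Na' * (Ya' - ya') ^ 2 / (2 * Sa'2) := by
      field_simp
      ring

/-- deterministic domination of the plug-in GLR statistic by the
summed self-normalized deviation.  If the true means satisfy y_a ≤ y_{a'} − η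
with η ≥ 0 and the sample means satisfy Ȳ_a ≥ Ȳ_{a'} − η, then
(Ȳ_a − Ȳ_{a'} + η)²/(2(S_a²/N_a + S_{a'}²/N_{a'}))
  ≤ N_a(Ȳ_a − y_a)²/(2S_a²) + N_{a'}(Ȳ_{a'} − y_{a'})²/(2S_{a'}²). -/
theorem stmt19 (Na Na' : ℕ) (hNa : 1 ≤ Na) (hNa' : 1 ≤ Na')
    (ya ya' Ya Ya' Sa2 Sa'2 η : ℝ) (hη : 0 ≤ η)
    (hgap : ya ≤ ya' - η) (hemp : Ya' - η ≤ Ya)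
    (hS : 0 < Sa2) (hS' : 0 < Sa'2) :
    (Ya - Ya' + η) ^ 2 / (2 * (Sa2 / (Na : ℝ) + Sa'2 / (Na' : ℝ)))
      ≤ (Na : ℝ) * (Ya - ya) ^ 2 / (2 * Sa2) +
        (Na' : ℝ) * (Ya' - ya') ^ 2 / (2 * Sa'2) :=
  stmt19_general Na Na' hNa hNa' ya ya' Ya Ya' Sa2 Sa'2 η hgap hemp hS hS'
end
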